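/- arXiv:2411.04236 — 6 statements merged into one kernel-verified Lean document; each statement's English description precedes it below -/
import Mathlib

section
/- The sensitivity of the survey-weighted mean equals U_W·U_Y/N: for any two adjacent samples (y,w) and (y′,w′) with entries satisfying 0 ≤ y_i, y_i′ ≤ U_Y and 0 ≤ w_i, w_i′ ≤ U_W, one has |θ̂(y,w) − θ̂(y′,w′)| ≤ U_W·U_Y/N, and this bound is attained by some adjacent pair of samples. -/
open Finset

/-- The survey-weighted mean `θ̂(y,w) = (1/N)·Σᵢ yᵢ wᵢ`. -/
noncomputable def weightedMean (N n : ℕ) (y w : Fin n → ℝ) : ℝ :=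
  (1 / (N : ℝ)) * ∑ i, y i * w i

/-- Two samples `(y,w)` and `(y',w')` are adjacent if they agree on all but
(at most) one index. -/
def Adjacent {n : ℕ} (y w y' w' : Fin n → ℝ) : Prop :=
  ∃ i : Fin n, ∀ j : Fin n, j ≠ i → y j = y' j ∧ w j = w' j

theorem weightedMean_sub_of_eq_of_ne {N n : ℕ} {y w y' w' : Fin n → ℝ} {i : Fin n}
    (h : ∀ j, j ≠ i → y j = y' j ∧ w j = w' j) :
    weightedMean N n y w - weightedMean N n y' w' = (y i * w i - y' i * w' i) / N := by
  have hsum : ∑ j, y j * w j - ∑ j, y' j * w' j = y i * w i - y' i * w' i := by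
    rw [← sum_sub_distrib]
    refine sum_eq_single i (fun j _ hj => ?_) (by simp)
    rw [(h j hj).1, (h j hj).2, sub_self]
  rw [weightedMean, weightedMean, ← mul_sub, hsum, one_div_mul_eq_div]

theorem abs_mul_sub_mul_le {a b a' b' A B : ℝ} (ha : 0 ≤ a ∧ a ≤ A) (hb : 0 ≤ b ∧ b ≤ B)
    (ha' : 0 ≤ a' ∧ a' ≤ A) (hb' : 0 ≤ b' ∧ b' ≤ B) : |a * b - a' * b'| ≤ A * B :=
  abs_sub_le_of_nonneg_of_le (mul_nonneg ha.1 hb.1) (mul_le_mul ha.2 hb.2 hb.1 (ha.1.trans ha.2))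
    (mul_nonneg ha'.1 hb'.1) (mul_le_mul ha'.2 hb'.2 hb'.1 (ha'.1.trans ha'.2))

theorem Adjacent.abs_weightedMean_sub_le {N n : ℕ} {y w y' w' : Fin n → ℝ} {UY UW : ℝ}
    (hadj : Adjacent y w y' w')
    (hy : ∀ i, 0 ≤ y i ∧ y i ≤ UY) (hy' : ∀ i, 0 ≤ y' i ∧ y' i ≤ UY)
    (hw : ∀ i, 0 ≤ w i ∧ w i ≤ UW) (hw' : ∀ i, 0 ≤ w' i ∧ w' i ≤ UW) :
    |weightedMean N n y w - weightedMean N n y' w'| ≤ UW * UY / N := by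
  obtain ⟨i, hi⟩ := hadj
  rw [weightedMean_sub_of_eq_of_ne hi, abs_div, Nat.abs_cast, mul_comm UW]
  exact div_le_div_of_nonneg_right (abs_mul_sub_mul_le (hy i) (hw i) (hy' i) (hw' i))
    N.cast_nonneg

theorem exists_adjacent_abs_weightedMean_sub_eq (N : ℕ) {n : ℕ} (hn : 1 ≤ n) {UY UW : ℝ}
    (hUY : 0 ≤ UY) (hUW : 0 ≤ UW) :
    ∃ y w y' w' : Fin n → ℝ, Adjacent y w y' w' ∧
      (∀ i, 0 ≤ y i ∧ y i ≤ UY) ∧ (∀ i, 0 ≤ y' i ∧ y' i ≤ UY) ∧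
      (∀ i, 0 ≤ w i ∧ w i ≤ UW) ∧ (∀ i, 0 ≤ w' i ∧ w' i ≤ UW) ∧
      |weightedMean N n y w - weightedMean N n y' w'| = UW * UY / N := by
  let i₀ : Fin n := ⟨0, hn⟩
  have hagree : ∀ j, j ≠ i₀ → UY = Function.update (fun _ => UY) i₀ 0 j ∧ UW = UW :=
    fun j hj => ⟨(Function.update_of_ne hj (0 : ℝ) fun _ => UY).symm, rfl⟩
  refine ⟨fun _ => UY, fun _ => UW, Function.update (fun _ => UY) i₀ 0, fun _ => UW,
    ⟨i₀, hagree⟩, fun _ => ⟨hUY, le_rfl⟩, fun j => ?_, fun _ => ⟨hUW, le_rfl⟩,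
    fun _ => ⟨hUW, le_rfl⟩, ?_⟩
  · rcases eq_or_ne j i₀ with rfl | hj
    · simpa using hUY
    · simpa [Function.update_of_ne hj] using hUY
  · rw [weightedMean_sub_of_eq_of_ne hagree, Function.update_self, zero_mul, sub_zero,
      mul_comm, abs_of_nonneg (by positivity)]

theorem weighted_mean_sensitivity_general
    (N n : ℕ) (hn : 1 ≤ n) (UY UW : ℝ) (hUY : 0 < UY) (hUW : 0 < UW) :
    (∀ y w y' w' : Fin n → ℝ, Adjacent y w y' w' →
      (∀ i, 0 ≤ y i ∧ y i ≤ UY) → (∀ i, 0 ≤ y' i ∧ y' i ≤ UY) →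
      (∀ i, 0 ≤ w i ∧ w i ≤ UW) → (∀ i, 0 ≤ w' i ∧ w' i ≤ UW) →
      |weightedMean N n y w - weightedMean N n y' w'| ≤ UW * UY / N) ∧
    (∃ y w y' w' : Fin n → ℝ, Adjacent y w y' w' ∧
      (∀ i, 0 ≤ y i ∧ y i ≤ UY) ∧ (∀ i, 0 ≤ y' i ∧ y' i ≤ UY) ∧
      (∀ i, 0 ≤ w i ∧ w i ≤ UW) ∧ (∀ i, 0 ≤ w' i ∧ w' i ≤ UW) ∧
      |weightedMean N n y w - weightedMean N n y' w'| = UW * UY / N) :=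
  ⟨fun _ _ _ _ hadj => hadj.abs_weightedMean_sub_le,
    exists_adjacent_abs_weightedMean_sub_eq N hn hUY.le hUW.le⟩

/-- the sensitivity of the survey-weighted mean equals `U_W·U_Y/N`:
the bound holds for all adjacent bounded samples, and it is attained. -/
theorem weighted_mean_sensitivity
    (N n : ℕ) (hn : 1 ≤ n) (hnN : n ≤ N) (UY UW : ℝ) (hUY : 0 < UY) (hUW : 0 < UW) :
    (∀ y w y' w' : Fin n → ℝ, Adjacent y w y' w' →
      (∀ i, 0 ≤ y i ∧ y i ≤ UY) → (∀ i, 0 ≤ y' i ∧ y' i ≤ UY) →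
      (∀ i, 0 ≤ w i ∧ w i ≤ UW) → (∀ i, 0 ≤ w' i ∧ w' i ≤ UW) →
      |weightedMean N n y w - weightedMean N n y' w'| ≤ UW * UY / N) ∧
    (∃ y w y' w' : Fin n → ℝ, Adjacent y w y' w' ∧
      (∀ i, 0 ≤ y i ∧ y i ≤ UY) ∧ (∀ i, 0 ≤ y' i ∧ y' i ≤ UY) ∧
      (∀ i, 0 ≤ w i ∧ w i ≤ UW) ∧ (∀ i, 0 ≤ w' i ∧ w' i ≤ UW) ∧
      |weightedMean N n y w - weightedMean N n y' w'| = UW * UY / N) :=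
  weighted_mean_sensitivity_general N n hn UY UW hUY hUW
end

section
/- Lemma 1 (optimal regularization): with ρ > 0, U_Y > 0 and U_W > N/n, the function ℓ(λ) = (1/(2ρ))·(U_Y/N)²·((1−λ)·U_W + λ·N/n)² + λ²·(θ̂₀ − θ̂)² is minimized over λ ∈ [0,1] at λ* = min{ 1 , [ (U_W/ρ)·(U_Y/N)²·(U_W − N/n) ] / [ (1/ρ)·(U_Y/N)²·(U_W − N/n)² + 2·(θ̂₀ − θ̂)² ] }; that is, ℓ(λ*) ≤ ℓ(λ) for all λ ∈ [0,1]. -/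
/-!
The loss is a convex quadratic `A λ² - 2 B λ + C` in `λ`, with `A = (U_Y/N)² (U_W - N/n)² / (2ρ) + (θ̂₀ - θ̂)²`
and `B = U_W (U_Y/N)² (U_W - N/n) / (2ρ)`, and the second coordinate of `λ*` is its vertex `B / A`.
A convex quadratic restricted to a half-line `(-∞, b]` is minimized at the point of the half-line
closest to its vertex, which is `min b (B / A)`.
-/

lemma sq_min_sub_le {b x x₀ : ℝ} (hx : x ≤ b) : (min b x₀ - x₀) ^ 2 ≤ (x - x₀) ^ 2 := by
  rcases le_total x₀ b with h | h
  · simp [min_eq_right h, sq_nonneg]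
  · rw [min_eq_left h]
    nlinarith

lemma quadratic_min_le_of_le {A x₀ b x : ℝ} (hA : 0 ≤ A) (hx : x ≤ b) :
    A * min b x₀ ^ 2 - 2 * (A * x₀) * min b x₀ ≤ A * x ^ 2 - 2 * (A * x₀) * x := by
  have hvertex : ∀ y, A * y ^ 2 - 2 * (A * x₀) * y = A * ((y - x₀) ^ 2 - x₀ ^ 2) := fun y => by ring
  rw [hvertex, hvertex]
  exact mul_le_mul_of_nonneg_left (sub_le_sub_right (sq_min_sub_le hx) _) hA

theorem optimal_regularization_general
    (N n : ℕ) (UY UW ρ θhat0 θhat : ℝ)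
    (hρ : 0 < ρ)
    (ℓ : ℝ → ℝ)
    (hℓ : ∀ lam, ℓ lam = (1 / (2 * ρ)) * (UY / N) ^ 2 *
        ((1 - lam) * UW + lam * (N : ℝ) / (n : ℝ)) ^ 2 + lam ^ 2 * (θhat0 - θhat) ^ 2)
    (lamStar : ℝ)
    (hstar : lamStar = min 1
      (((UW / ρ) * (UY / N) ^ 2 * (UW - (N : ℝ) / n)) /
        ((1 / ρ) * (UY / N) ^ 2 * (UW - (N : ℝ) / n) ^ 2 + 2 * (θhat0 - θhat) ^ 2))) :
    ∀ lam ∈ Set.Icc (0 : ℝ) 1, ℓ lamStar ≤ ℓ lam := by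
  intro lam hlam
  set a := (1 / (2 * ρ)) * (UY / N) ^ 2
  set c := UW - (N : ℝ) / n
  set d := (θhat0 - θhat) ^ 2
  have ha : 0 ≤ a := by positivity
  have hloss : ∀ x, ℓ x = (a * c ^ 2 + d) * x ^ 2 - 2 * (a * UW * c) * x + a * UW ^ 2 :=
    fun x => by rw [hℓ]; ring
  -- `B = A * (B / A)` also when `A = 0`, despite `x / 0 = 0`.
  have hdegenerate : a * c ^ 2 + d = 0 → a * UW * c = 0 := by
    intro h
    have hac : a * c ^ 2 = 0 := ((add_eq_zero_iff_of_nonneg (by positivity) (sq_nonneg _)).1 h).1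
    rcases mul_eq_zero.1 hac with h | h
    · simp [h]
    · simp [pow_eq_zero_iff two_ne_zero |>.1 h]
  set vertex := a * UW * c / (a * c ^ 2 + d) with hvertex
  have hlamStar : lamStar = min 1 vertex := by
    rw [hstar, hvertex, ← mul_div_mul_left (a * UW * c) _ two_ne_zero]
    congr 2 <;> ring
  have hB : a * UW * c = (a * c ^ 2 + d) * vertex := (mul_div_cancel_of_imp' hdegenerate).symm
  rw [hloss, hloss, hlamStar, hB]
  exact add_le_add_left (quadratic_min_le_of_le (by positivity) hlam.2) _

/-- Lemma 1, optimal regularization: with `ρ > 0`, `U_Y > 0` and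
`U_W > N/n`, the loss `ℓ(λ) = (1/(2ρ))·(U_Y/N)²·((1−λ)·U_W + λ·N/n)² + λ²·(θ̂₀ − θ̂)²`
is minimized over `λ ∈ [0,1]` at
`λ* = min{1, ((U_W/ρ)·(U_Y/N)²·(U_W − N/n)) / ((1/ρ)·(U_Y/N)²·(U_W − N/n)² + 2·(θ̂₀ − θ̂)²)}`. -/
theorem optimal_regularization
    (N n : ℕ) (hn : 1 ≤ n) (hnN : n ≤ N) (UY UW ρ θhat0 θhat : ℝ)
    (hUY : 0 < UY) (hρ : 0 < ρ) (hUW : (N : ℝ) / n < UW)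
    (ℓ : ℝ → ℝ)
    (hℓ : ∀ lam, ℓ lam = (1 / (2 * ρ)) * (UY / N) ^ 2 *
        ((1 - lam) * UW + lam * (N : ℝ) / (n : ℝ)) ^ 2 + lam ^ 2 * (θhat0 - θhat) ^ 2)
    (lamStar : ℝ)
    (hstar : lamStar = min 1
      (((UW / ρ) * (UY / N) ^ 2 * (UW - (N : ℝ) / n)) /
        ((1 / ρ) * (UY / N) ^ 2 * (UW - (N : ℝ) / n) ^ 2 + 2 * (θhat0 - θhat) ^ 2))) :
    ∀ lam ∈ Set.Icc (0 : ℝ) 1, ℓ lamStar ≤ ℓ lam :=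
  optimal_regularization_general N n UY UW ρ θhat0 θhat hρ ℓ hℓ lamStar hstar
end

section
/- If U_W > N/n, then the optimal regularization parameter is strictly positive: λ* = min{1, [ (U_W/ρ)·(U_Y/N)²·(U_W − N/n) ] / [ (1/ρ)·(U_Y/N)²·(U_W − N/n)² + 2·(θ̂₀ − θ̂)² ]} > 0. Consequently, for every sufficiently small λ > 0, ℓ(λ) < ℓ(0), i.e., some regularization strictly decreases the loss ℓ compared to using the survey weights as-is. -/
/-!
Writing `e = U_W − N/n`, the loss is a convex parabola in `λ`,
`ℓ(λ) − ℓ(0) = λ · (λ · D/2 − (U_W/ρ)(U_Y/N)² e)` with `D = (1/ρ)(U_Y/N)² e² + 2(θ̂₀ − θ̂)²`,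
whose slope at `0` is negative exactly because `U_W > N/n`. Its vertex is
`λ_c = (U_W/ρ)(U_Y/N)² e / D > 0`, and `ℓ(λ) < ℓ(0)` on `(0, 2λ_c)`, in particular on `(0, λ*)`.
-/

namespace Regularization

/-- The loss `ℓ`, with `K = (U_Y/N)²`, `c = N/n` and `Δ = θ̂₀ − θ̂`. -/
noncomputable def loss (ρ K UW c Δ lam : ℝ) : ℝ :=
  1 / (2 * ρ) * K * ((1 - lam) * UW + lam * c) ^ 2 + lam ^ 2 * Δ ^ 2

noncomputable def lambdaCrit (ρ K UW c Δ : ℝ) : ℝ :=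
  (UW / ρ) * K * (UW - c) / ((1 / ρ) * K * (UW - c) ^ 2 + 2 * Δ ^ 2)

variable {ρ K UW c Δ : ℝ}

lemma lambdaCrit_denom_pos (hρ : 0 < ρ) (hK : 0 < K) (hc : c ≠ UW) :
    0 < (1 / ρ) * K * (UW - c) ^ 2 + 2 * Δ ^ 2 := by
  have : UW - c ≠ 0 := sub_ne_zero.mpr hc.symm
  positivity

lemma lambdaCrit_pos (hρ : 0 < ρ) (hK : 0 < K) (hc0 : 0 ≤ c) (hcUW : c < UW) :
    0 < lambdaCrit ρ K UW c Δ := by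
  have hUW : 0 < UW := hc0.trans_lt hcUW
  have he : 0 < UW - c := sub_pos.mpr hcUW
  exact div_pos (by positivity) (lambdaCrit_denom_pos hρ hK hcUW.ne)

lemma loss_sub_loss_zero (hρ : ρ ≠ 0) (lam : ℝ) :
    loss ρ K UW c Δ lam - loss ρ K UW c Δ 0 =
      lam * (lam * ((1 / ρ) * K * (UW - c) ^ 2 + 2 * Δ ^ 2) / 2 - (UW / ρ) * K * (UW - c)) := by
  unfold loss
  field_simp
  ring

lemma loss_lt_loss_zero (hρ : 0 < ρ) (hK : 0 < K) (hc : c ≠ UW) {lam : ℝ}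
    (hlam : 0 < lam) (hlt : lam < 2 * lambdaCrit ρ K UW c Δ) :
    loss ρ K UW c Δ lam < loss ρ K UW c Δ 0 := by
  have hD := lambdaCrit_denom_pos (Δ := Δ) hρ hK hc
  have hslope : lam * ((1 / ρ) * K * (UW - c) ^ 2 + 2 * Δ ^ 2) / 2 < (UW / ρ) * K * (UW - c) := by
    rw [lambdaCrit, mul_div_assoc', lt_div_iff₀ hD] at hlt
    linarith
  have hdiff := loss_sub_loss_zero (K := K) (UW := UW) (c := c) (Δ := Δ) hρ.ne' lam
  linarith [mul_neg_of_pos_of_neg hlam (sub_neg.mpr hslope)]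

end Regularization

open Regularization in
/-- if `U_W > N/n`, the optimal regularization parameter
`λ* = min{1, λ_c}` is strictly positive, and consequently for every
sufficiently small `λ > 0` we have `ℓ(λ) < ℓ(0)`: some regularization strictly
decreases the loss compared to using the survey weights as-is. -/
theorem optimal_regularization_positive
    (N n : ℕ) (hn : 1 ≤ n) (hnN : n ≤ N) (UY UW ρ θhat0 θhat : ℝ)
    (hUY : 0 < UY) (hρ : 0 < ρ) (hUW : (N : ℝ) / n < UW)
    (ℓ : ℝ → ℝ)
    (hℓ : ∀ lam, ℓ lam = (1 / (2 * ρ)) * (UY / N) ^ 2 *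
        ((1 - lam) * UW + lam * (N : ℝ) / (n : ℝ)) ^ 2 + lam ^ 2 * (θhat0 - θhat) ^ 2)
    (lamStar : ℝ)
    (hstar : lamStar = min 1
      (((UW / ρ) * (UY / N) ^ 2 * (UW - (N : ℝ) / n)) /
        ((1 / ρ) * (UY / N) ^ 2 * (UW - (N : ℝ) / n) ^ 2 + 2 * (θhat0 - θhat) ^ 2))) :
    0 < lamStar ∧ ∃ δ > (0 : ℝ), ∀ lam : ℝ, 0 < lam → lam < δ → ℓ lam < ℓ 0 := by
  have hN : (0 : ℝ) < N := by exact_mod_cast hn.trans hnN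
  have hK : 0 < (UY / N) ^ 2 := by positivity
  have hloss : ℓ = loss ρ ((UY / N) ^ 2) UW (N / n) (θhat0 - θhat) := by
    funext lam
    rw [hℓ, loss, mul_div_assoc]
  have hcrit := lambdaCrit_pos (Δ := θhat0 - θhat) hρ hK (by positivity) hUW
  have hstar_le : lamStar ≤ lambdaCrit ρ ((UY / N) ^ 2) UW (N / n) (θhat0 - θhat) :=
    hstar ▸ min_le_right _ _
  have hstar_pos : 0 < lamStar := hstar ▸ lt_min one_pos hcrit
  refine ⟨hstar_pos, lamStar, hstar_pos, fun lam hlam hlt => ?_⟩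
  rw [hloss]
  exact loss_lt_loss_zero hρ hK hUW.ne hlam (by linarith)
end

section
/- Characterization of nontrivial regularization: with ρ > 0 and U_W > N/n, the unconstrained critical value λ_c = [ (U_W/ρ)·(U_Y/N)²·(U_W − N/n) ] / [ (1/ρ)·(U_Y/N)²·(U_W − N/n)² + 2·(θ̂₀ − θ̂)² ] satisfies λ_c ≤ 1 if and only if |θ̂₀ − θ̂| ≥ sqrt( (U_Y²/(2·ρ·N·n))·(U_W − N/n) ). Equivalently, λ_c < 1 if and only if |θ̂₀ − θ̂| > sqrt( (U_Y²/(2·ρ·N·n))·(U_W − N/n) ). -/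
/-! The denominator of `λ_c` exceeds its numerator by exactly `2 (|θ̂₀ − θ̂|² − τ²)`, where
`τ = sqrt((U_Y²/(2ρNn))·(U_W − N/n))` is the threshold: the `U_W`-terms cancel and
`(U_Y/N)²·(N/n) = U_Y²/(Nn)`. As the denominator is positive, comparing `λ_c` with `1` is
comparing `τ` with `|θ̂₀ − θ̂|`. -/

section

variable {p d c X t : ℝ}

lemma div_le_one_iff_sqrt_le_abs (hd : 0 < d) (hc : 0 < c) (hgap : d - p = c * (t ^ 2 - X)) :
    p / d ≤ 1 ↔ √X ≤ |t| := by
  rw [← Real.sqrt_sq_eq_abs, div_le_one hd, Real.sqrt_le_sqrt_iff (sq_nonneg t), ← sub_nonneg,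
    hgap, mul_nonneg_iff_of_pos_left hc, sub_nonneg]

lemma div_lt_one_iff_sqrt_lt_abs (hd : 0 < d) (hc : 0 < c) (hX : 0 ≤ X)
    (hgap : d - p = c * (t ^ 2 - X)) :
    p / d < 1 ↔ √X < |t| := by
  rw [← Real.sqrt_sq_eq_abs, div_lt_one hd, Real.sqrt_lt_sqrt_iff hX, ← sub_pos, hgap,
    mul_pos_iff_of_pos_left hc, sub_pos]

end

lemma critical_denominator_sub_numerator {N n ρ : ℝ} (hN : N ≠ 0) (hn : n ≠ 0) (hρ : ρ ≠ 0)
    (UY UW t : ℝ) :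
    (1 / ρ * (UY / N) ^ 2 * (UW - N / n) ^ 2 + 2 * t ^ 2) - UW / ρ * (UY / N) ^ 2 * (UW - N / n)
      = 2 * (t ^ 2 - UY ^ 2 / (2 * ρ * N * n) * (UW - N / n)) := by
  field_simp
  ring

/-- characterization of nontrivial regularization: with `ρ > 0`
and `U_W > N/n`, the unconstrained critical value `λ_c` satisfies `λ_c ≤ 1` iff
`|θ̂₀ − θ̂| ≥ sqrt((U_Y²/(2ρNn))·(U_W − N/n))`, and `λ_c < 1` iff the
inequality is strict. -/
theorem nontrivial_regularization_characterization
    (N n : ℕ) (hn : 1 ≤ n) (hnN : n ≤ N) (UY UW ρ θhat0 θhat : ℝ)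
    (hUY : 0 < UY) (hρ : 0 < ρ) (hUW : (N : ℝ) / n < UW)
    (lamC : ℝ)
    (hc : lamC = ((UW / ρ) * (UY / N) ^ 2 * (UW - (N : ℝ) / n)) /
        ((1 / ρ) * (UY / N) ^ 2 * (UW - (N : ℝ) / n) ^ 2 + 2 * (θhat0 - θhat) ^ 2)) :
    (lamC ≤ 1 ↔
      Real.sqrt (UY ^ 2 / (2 * ρ * N * n) * (UW - (N : ℝ) / n)) ≤ |θhat0 - θhat|) ∧
    (lamC < 1 ↔
      Real.sqrt (UY ^ 2 / (2 * ρ * N * n) * (UW - (N : ℝ) / n)) < |θhat0 - θhat|) := by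
  have hn₀ : (0 : ℝ) < n := by exact_mod_cast hn
  have hN₀ : (0 : ℝ) < N := by exact_mod_cast hn.trans hnN
  have hUW₀ : 0 < UW - (N : ℝ) / n := sub_pos.mpr hUW
  have hden : 0 < 1 / ρ * (UY / N) ^ 2 * (UW - (N : ℝ) / n) ^ 2 + 2 * (θhat0 - θhat) ^ 2 := by
    positivity
  have hX : 0 ≤ UY ^ 2 / (2 * ρ * N * n) * (UW - (N : ℝ) / n) := by positivity
  have hsub := critical_denominator_sub_numerator hN₀.ne' hn₀.ne' hρ.ne' UY UW (θhat0 - θhat)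
  subst hc
  exact ⟨div_le_one_iff_sqrt_le_abs hden two_pos hsub,
    div_lt_one_iff_sqrt_lt_abs hden two_pos hX hsub⟩
end

section
/- Privacy-budget characterization of nontrivial regularization: with U_W > N/n and θ̂₀ ≠ θ̂, the unconstrained critical value λ_c = [ (U_W/ρ)·(U_Y/N)²·(U_W − N/n) ] / [ (1/ρ)·(U_Y/N)²·(U_W − N/n)² + 2·(θ̂₀ − θ̂)² ] satisfies λ_c < 1 if and only if ρ > U_Y²·(U_W − N/n) / ( 2·(θ̂₀ − θ̂)²·N·n ). -/
/-!
Writing `U_W = (U_W - N/n) + N/n`, the numerator of `λ_c` exceeds the first summand of its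
denominator by exactly `(1/ρ)·(U_Y/N)²·(U_W - N/n)·(N/n) = U_Y²·(U_W - N/n)/(ρ·N·n)`, so
`λ_c < 1` says that this excess is below `2·(θ̂₀ - θ̂)²`, which is the bound on `ρ`.
-/

lemma mul_add_mul_div_add_lt_one_iff {a b c δ : ℝ} (ha : 0 ≤ a) (hδ : 0 < δ) :
    a * (b + c) * b / (a * b ^ 2 + δ) < 1 ↔ a * b * c < δ := by
  rw [div_lt_one (by positivity), show a * (b + c) * b = a * b ^ 2 + a * b * c by ring,
    add_lt_add_iff_left]

lemma mul_div_lt_iff_lt {x d ρ : ℝ} (hd : 0 < d) (hρ : 0 < ρ) : x * d / ρ < d ↔ x < ρ := by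
  rw [div_lt_iff₀ hρ, mul_comm d, mul_lt_mul_iff_left₀ hd]

theorem privacy_budget_characterization_general
    (N n : ℕ) (hn : 1 ≤ n) (hnN : n ≤ N) (UY UW ρ θhat0 θhat : ℝ)
    (hρ : 0 < ρ) (hne : θhat0 ≠ θhat)
    (lamC : ℝ)
    (hc : lamC = ((UW / ρ) * (UY / N) ^ 2 * (UW - (N : ℝ) / n)) /
        ((1 / ρ) * (UY / N) ^ 2 * (UW - (N : ℝ) / n) ^ 2 + 2 * (θhat0 - θhat) ^ 2)) :
    lamC < 1 ↔
      UY ^ 2 * (UW - (N : ℝ) / n) / (2 * (θhat0 - θhat) ^ 2 * N * n) < ρ := by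
  have hn₀ : (0 : ℝ) < n := by exact_mod_cast hn
  have hN₀ : (0 : ℝ) < N := by exact_mod_cast hn.trans hnN
  have hΔ : 0 < 2 * (θhat0 - θhat) ^ 2 := by
    have := sub_ne_zero.mpr hne
    positivity
  set b := UW - (N : ℝ) / n
  set a := 1 / ρ * (UY / N) ^ 2
  have hnum : UW / ρ * (UY / N) ^ 2 * b = a * (b + N / n) * b := by
    simp only [a, b]
    ring
  have hexcess : a * b * (N / n) =
      UY ^ 2 * b / (2 * (θhat0 - θhat) ^ 2 * N * n) * (2 * (θhat0 - θhat) ^ 2) / ρ := by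
    simp only [a]
    field_simp
  rw [hc, hnum, mul_add_mul_div_add_lt_one_iff (by positivity) hΔ, hexcess,
    mul_div_lt_iff_lt hΔ hρ]

/-- privacy-budget characterization of nontrivial regularization:
with `U_W > N/n` and `θ̂₀ ≠ θ̂`, the unconstrained critical value `λ_c`
satisfies `λ_c < 1` iff `ρ > U_Y²·(U_W − N/n) / (2·(θ̂₀ − θ̂)²·N·n)`. -/
theorem privacy_budget_characterization
    (N n : ℕ) (hn : 1 ≤ n) (hnN : n ≤ N) (UY UW ρ θhat0 θhat : ℝ)
    (hUY : 0 < UY) (hρ : 0 < ρ) (hUW : (N : ℝ) / n < UW) (hne : θhat0 ≠ θhat)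
    (lamC : ℝ)
    (hc : lamC = ((UW / ρ) * (UY / N) ^ 2 * (UW - (N : ℝ) / n)) /
        ((1 / ρ) * (UY / N) ^ 2 * (UW - (N : ℝ) / n) ^ 2 + 2 * (θhat0 - θhat) ^ 2)) :
    lamC < 1 ↔
      UY ^ 2 * (UW - (N : ℝ) / n) / (2 * (θhat0 - θhat) ^ 2 * N * n) < ρ :=
  privacy_budget_characterization_general N n hn hnN UY UW ρ θhat0 θhat hρ hne lamC hc
end

section
/- Sensitivity of the approximate Horvitz–Thompson variance estimator: for any two adjacent samples (y,w) and (y′,w′) with entries satisfying 0 ≤ y_i, y_i′ ≤ U_Y and 1 ≤ w_i, w_i′ ≤ U_W, the estimator V̂(y,w) = (1/N²)·Σ_{i=1}^n w_i·(w_i − 1)·y_i² satisfies |V̂(y,w) − V̂(y′,w′)| ≤ (U_W·U_Y/N)², i.e., Δ(V̂) ≤ Δ(θ̂)² where Δ(θ̂) = U_W·U_Y/N. -/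
/-! Adjacent samples differ in a single summand `wᵢ(wᵢ - 1)yᵢ²`, every summand lies in
`[0, (U_W U_Y)²]`, and two numbers in `[0, c]` differ by at most `c`. -/

open Finset

/-- The approximate Horvitz–Thompson variance estimator
`V̂(y,w) = (1/N²)·Σᵢ wᵢ·(wᵢ − 1)·yᵢ²`. -/
noncomputable def approxHTVar (N n : ℕ) (y w : Fin n → ℝ) : ℝ :=
  (1 / (N : ℝ) ^ 2) * ∑ i, w i * (w i - 1) * y i ^ 2

theorem Finset.sum_sub_sum_eq_of_eq_off {ι M : Type*} [Fintype ι] [AddCommGroup M]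
    {f g : ι → M} (i : ι) (h : ∀ j, j ≠ i → f j = g j) :
    ∑ j, f j - ∑ j, g j = f i - g i := by
  rw [← sum_sub_distrib, sum_eq_single i (fun j _ hj ↦ by rw [h j hj, sub_self])
    (fun hi ↦ absurd (mem_univ i) hi)]

theorem mul_sub_one_mul_sq_mem_Icc {a b UY UW : ℝ} (ha₀ : 0 ≤ a) (ha : a ≤ UY)
    (hb₁ : 1 ≤ b) (hb : b ≤ UW) :
    b * (b - 1) * a ^ 2 ∈ Set.Icc 0 ((UW * UY) ^ 2) := by
  have hb' : b * (b - 1) ≤ UW ^ 2 := by nlinarith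
  have ha' : a ^ 2 ≤ UY ^ 2 := pow_le_pow_left₀ ha₀ ha 2
  refine ⟨by positivity, ?_⟩
  calc b * (b - 1) * a ^ 2 ≤ UW ^ 2 * UY ^ 2 :=
        mul_le_mul hb' ha' (sq_nonneg a) (sq_nonneg UW)
    _ = (UW * UY) ^ 2 := (mul_pow UW UY 2).symm

theorem approxHTVar_sub_of_eq_off {N n : ℕ} {y w y' w' : Fin n → ℝ} (i : Fin n)
    (h : ∀ j, j ≠ i → y j = y' j ∧ w j = w' j) :
    approxHTVar N n y w - approxHTVar N n y' w' =
      (w i * (w i - 1) * y i ^ 2 - w' i * (w' i - 1) * y' i ^ 2) / (N : ℝ) ^ 2 := by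
  rw [approxHTVar, approxHTVar, ← mul_sub,
    sum_sub_sum_eq_of_eq_off i fun j hj ↦ by rw [(h j hj).1, (h j hj).2], one_div_mul_eq_div]

theorem approxHTVar_sensitivity_general
    (N n : ℕ) (UY UW : ℝ)
    (y w y' w' : Fin n → ℝ) (hadj : Adjacent y w y' w')
    (hy : ∀ i, 0 ≤ y i ∧ y i ≤ UY) (hy' : ∀ i, 0 ≤ y' i ∧ y' i ≤ UY)
    (hw : ∀ i, 1 ≤ w i ∧ w i ≤ UW) (hw' : ∀ i, 1 ≤ w' i ∧ w' i ≤ UW) :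
    |approxHTVar N n y w - approxHTVar N n y' w'| ≤ (UW * UY / N) ^ 2 := by
  obtain ⟨i, hi⟩ := hadj
  obtain ⟨hA₀, hA⟩ := mul_sub_one_mul_sq_mem_Icc (hy i).1 (hy i).2 (hw i).1 (hw i).2
  obtain ⟨hB₀, hB⟩ := mul_sub_one_mul_sq_mem_Icc (hy' i).1 (hy' i).2 (hw' i).1 (hw' i).2
  rw [approxHTVar_sub_of_eq_off i hi, abs_div, abs_of_nonneg (sq_nonneg (N : ℝ)), div_pow]
  exact div_le_div_of_nonneg_right (abs_sub_le_of_nonneg_of_le hA₀ hA hB₀ hB) (sq_nonneg _)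

/-- sensitivity of the approximate Horvitz–Thompson variance
estimator: for adjacent samples with `0 ≤ yᵢ, yᵢ′ ≤ U_Y` and
`1 ≤ wᵢ, wᵢ′ ≤ U_W`, `|V̂(y,w) − V̂(y',w')| ≤ (U_W·U_Y/N)²`, i.e.
`Δ(V̂) ≤ Δ(θ̂)²`. -/
theorem approxHTVar_sensitivity
    (N n : ℕ) (hn : 1 ≤ n) (hnN : n ≤ N) (UY UW : ℝ)
    (hUY : 0 < UY) (hUW : 1 ≤ UW)
    (y w y' w' : Fin n → ℝ) (hadj : Adjacent y w y' w')
    (hy : ∀ i, 0 ≤ y i ∧ y i ≤ UY) (hy' : ∀ i, 0 ≤ y' i ∧ y' i ≤ UY)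
    (hw : ∀ i, 1 ≤ w i ∧ w i ≤ UW) (hw' : ∀ i, 1 ≤ w' i ∧ w' i ≤ UW) :
    |approxHTVar N n y w - approxHTVar N n y' w'| ≤ (UW * UY / N) ^ 2 :=
  approxHTVar_sensitivity_general N n UY UW y w y' w' hadj hy hy' hw hw'
end
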